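/- arXiv:2010.02280 — 7 statements merged into one kernel-verified Lean document; each statement's English description precedes it below -/
import Mathlib

section
/- Let n ≥ 2, let H be a symmetric positive definite n×n real matrix, c ∈ ℝⁿ, and w ∈ ℝⁿ with w ≠ 0. Define c⁺ = c − (1/(n+1))·Hw/√(⟨w, Hw⟩) and H⁺ = (n²/(n²−1))·(H − (2/(n+1))·(Hw)(Hw)ᵀ/⟨w, Hw⟩). Then H⁺ is symmetric positive definite and the half-ellipsoid {x ∈ E(c,H) : ⟨w, x − c⟩ ≤ 0} is contained in the ellipsoid E(c⁺, H⁺). -/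
/-!
Write `a = H w` and `s = ⟨w, H w⟩ > 0`. By Cauchy–Schwarz for the form of `H`,
`⟨a, x⟩² ≤ s ⟨x, H x⟩`, so removing `2/(n+1) < 1` times `a aᵀ / s` from `H` keeps it positive
definite. By Sherman–Morrison, `(H⁺)⁻¹ = ((n²-1)/n²) (H⁻¹ + 2/((n-1) s) w wᵀ)`. For `y = x - c`,
`q = ⟨H⁻¹ y, y⟩` and `u = ⟨w, y⟩ / √s`, the quadratic form of `(H⁺)⁻¹` at `x - c⁺` is then
`((n²-1)/n²) (q + 2u/(n+1) + 1/(n+1)² + 2(u + 1/(n+1))²/(n-1))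
  = 1 - ((n²-1)(1-q) - 2(n+1) u (1+u)) / n²`.
Cauchy–Schwarz for the form of `H⁻¹` gives `u² ≤ q ≤ 1`, and the cut gives `u ≤ 0`, so
`-1 ≤ u ≤ 0` and the form is at most `1`.
-/

open Matrix

theorem Matrix.IsSymm.dotProduct_mulVec_comm {ι R : Type*} [Fintype ι] [CommSemiring R]
    {A : Matrix ι ι R} (hA : A.IsSymm) (u v : ι → R) : u ⬝ᵥ (A *ᵥ v) = v ⬝ᵥ (A *ᵥ u) := by
  rw [dotProduct_mulVec, ← mulVec_transpose, hA.eq, dotProduct_comm]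

section Field

variable {ι K : Type*} [Fintype ι] [DecidableEq ι] [Field K] {H : Matrix ι ι K}

theorem Matrix.IsSymm.mulVec_dotProduct_inv_mulVec (hH : H.IsSymm) (hdet : IsUnit H.det)
    (w y : ι → K) : (H *ᵥ w) ⬝ᵥ (H⁻¹ *ᵥ y) = w ⬝ᵥ y := by
  rw [hH.inv.dotProduct_mulVec_comm, mulVec_mulVec, nonsing_inv_mul _ hdet, one_mulVec,
    dotProduct_comm]

theorem Matrix.IsSymm.inv_mulVec_add_smul_mulVec_dotProduct (hH : H.IsSymm)
    (hdet : IsUnit H.det) (y w : ι → K) (k : K) :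
    (H⁻¹ *ᵥ (y + k • (H *ᵥ w))) ⬝ᵥ (y + k • (H *ᵥ w)) =
      (H⁻¹ *ᵥ y) ⬝ᵥ y + 2 * k * (w ⬝ᵥ y) + k ^ 2 * (w ⬝ᵥ (H *ᵥ w)) := by
  have hw : H⁻¹ *ᵥ (H *ᵥ w) = w := by rw [mulVec_mulVec, nonsing_inv_mul _ hdet, one_mulVec]
  simp only [mulVec_add, mulVec_smul, hw, add_dotProduct, dotProduct_add, smul_dotProduct,
    dotProduct_smul, smul_eq_mul, dotProduct_comm (H⁻¹ *ᵥ y),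
    hH.mulVec_dotProduct_inv_mulVec hdet]
  ring

theorem Matrix.IsSymm.inv_sub_smul_vecMulVec_mulVec (hH : H.IsSymm) (hdet : IsUnit H.det)
    {w : ι → K} (hs : w ⬝ᵥ (H *ᵥ w) ≠ 0) {σ : K} (hσ : σ ≠ 1) :
    (H - σ • ((w ⬝ᵥ (H *ᵥ w))⁻¹ • vecMulVec (H *ᵥ w) (H *ᵥ w)))⁻¹ =
      H⁻¹ + (σ / (1 - σ)) • ((w ⬝ᵥ (H *ᵥ w))⁻¹ • vecMulVec w w) := by
  have hrow : (H *ᵥ w) ᵥ* H⁻¹ = w := by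
    rw [← mulVec_transpose, hH.inv.eq, mulVec_mulVec, nonsing_inv_mul _ hdet, one_mulVec]
  refine inv_eq_right_inv ?_
  simp only [sub_mul, mul_add, Matrix.mul_smul, Matrix.smul_mul, mul_nonsing_inv _ hdet,
    mul_vecMulVec, vecMulVec_mul, hrow, smul_mulVec, vecMulVec_mulVec, op_smul_eq_smul,
    smul_vecMulVec, smul_smul, dotProduct_comm (H *ᵥ w) w]
  have hcoeff : σ / (1 - σ) * (w ⬝ᵥ (H *ᵥ w))⁻¹
      - σ / (1 - σ) * (w ⬝ᵥ (H *ᵥ w))⁻¹ * (σ * (w ⬝ᵥ (H *ᵥ w))⁻¹ * (w ⬝ᵥ (H *ᵥ w)))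
      = σ * (w ⬝ᵥ (H *ᵥ w))⁻¹ := by
    field_simp [sub_ne_zero.mpr hσ.symm]
  rw [← sub_smul, hcoeff, sub_add_cancel]

end Field

section Real

variable {ι : Type*} [Fintype ι]

theorem Matrix.PosSemidef.dotProduct_mulVec_sq_le {A : Matrix ι ι ℝ} (hA : A.PosSemidef)
    (u v : ι → ℝ) : (u ⬝ᵥ (A *ᵥ v)) ^ 2 ≤ (u ⬝ᵥ (A *ᵥ u)) * (v ⬝ᵥ (A *ᵥ v)) := by
  have hsymm : v ⬝ᵥ (A *ᵥ u) = u ⬝ᵥ (A *ᵥ v) :=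
    (isHermitian_iff_isSymm.mp hA.1).dotProduct_mulVec_comm v u
  have hquad : ∀ x : ℝ, 0 ≤ (v ⬝ᵥ (A *ᵥ v)) * (x * x) + 2 * (u ⬝ᵥ (A *ᵥ v)) * x
      + u ⬝ᵥ (A *ᵥ u) := fun x => by
    have := hA.dotProduct_mulVec_nonneg (u + x • v)
    simp only [star_trivial, mulVec_add, mulVec_smul, dotProduct_add, add_dotProduct,
      dotProduct_smul, smul_dotProduct, smul_eq_mul, hsymm] at this
    linarith
  have := discrim_le_zero hquad
  rw [discrim] at this
  linarith

theorem Matrix.PosDef.dotProduct_sq_le_mul_inv_mulVec_dotProduct [DecidableEq ι]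
    {H : Matrix ι ι ℝ} (hH : H.PosDef) (w y : ι → ℝ) :
    (w ⬝ᵥ y) ^ 2 ≤ (w ⬝ᵥ (H *ᵥ w)) * ((H⁻¹ *ᵥ y) ⬝ᵥ y) := by
  have hsymm := isHermitian_iff_isSymm.mp hH.1
  have hdet : IsUnit H.det := (isUnit_iff_isUnit_det H).mp hH.isUnit
  have := hH.inv.posSemidef.dotProduct_mulVec_sq_le (H *ᵥ w) y
  rwa [hsymm.mulVec_dotProduct_inv_mulVec hdet, hsymm.mulVec_dotProduct_inv_mulVec hdet,
    dotProduct_comm y] at this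

theorem Matrix.PosDef.sub_smul_vecMulVec_mulVec {H : Matrix ι ι ℝ} (hH : H.PosDef)
    (w : ι → ℝ) {σ : ℝ} (hσ : σ < 1) :
    (H - σ • ((w ⬝ᵥ (H *ᵥ w))⁻¹ • vecMulVec (H *ᵥ w) (H *ᵥ w))).PosDef := by
  have hV : (vecMulVec (H *ᵥ w) (H *ᵥ w)).IsHermitian := by
    simpa using (posSemidef_vecMulVec_self_star (H *ᵥ w)).1
  refine .of_dotProduct_mulVec_pos (hH.1.sub ((hV.smul (.all _)).smul (.all _))) fun x hx => ?_
  have hpos : 0 < x ⬝ᵥ (H *ᵥ x) := by simpa using hH.dotProduct_mulVec_pos hx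
  have hs : 0 ≤ w ⬝ᵥ (H *ᵥ w) := by simpa using hH.posSemidef.dotProduct_mulVec_nonneg w
  have hrank : (w ⬝ᵥ (H *ᵥ w))⁻¹ * (w ⬝ᵥ (H *ᵥ x)) ^ 2 ≤ x ⬝ᵥ (H *ᵥ x) := by
    rcases hs.eq_or_lt with hs | hs
    · simp [← hs, hpos.le]
    · rw [inv_mul_le_iff₀ hs]
      exact hH.posSemidef.dotProduct_mulVec_sq_le w x
  have hrank_nonneg : 0 ≤ (w ⬝ᵥ (H *ᵥ w))⁻¹ * (w ⬝ᵥ (H *ᵥ x)) ^ 2 := by positivity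
  simp only [star_trivial, sub_mulVec, smul_mulVec, vecMulVec_mulVec, dotProduct_sub,
    dotProduct_smul, smul_eq_mul, op_smul_eq_mul, dotProduct_comm (H *ᵥ w),
    (isHermitian_iff_isSymm.mp hH.1).dotProduct_mulVec_comm x w]
  rcases le_or_gt σ 0 with hσ0 | hσ0 <;> nlinarith

end Real

theorem ellipsoid_step_bound {N q u : ℝ} (hN : 1 < N) (hq : q ≤ 1) (hu : u ≤ 0)
    (huq : u ^ 2 ≤ q) :
    (N ^ 2 / (N ^ 2 - 1))⁻¹ * (q + 2 / (N + 1) * u + (1 / (N + 1)) ^ 2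
      + 2 / (N - 1) * (u + 1 / (N + 1)) ^ 2) ≤ 1 := by
  have hN1 : 0 < N - 1 := by linarith
  have hu1 : -1 ≤ u := by nlinarith
  have key : (N ^ 2 / (N ^ 2 - 1))⁻¹ * (q + 2 / (N + 1) * u + (1 / (N + 1)) ^ 2
      + 2 / (N - 1) * (u + 1 / (N + 1)) ^ 2)
      = 1 - ((N ^ 2 - 1) * (1 - q) + 2 * (N + 1) * (-u * (1 + u))) / N ^ 2 := by
    field_simp
    ring
  have hN2 : 0 ≤ N ^ 2 - 1 := by nlinarith
  have hq1 : 0 ≤ 1 - q := by linarith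
  have hu2 : 0 ≤ -u * (1 + u) := mul_nonneg (by linarith) (by linarith)
  rw [key, sub_le_self_iff]
  positivity

/-- one step of the ellipsoid method: the half-ellipsoid
`{x ∈ E(c,H) : ⟨w, x − c⟩ ≤ 0}` is contained in the ellipsoid `E(c⁺, H⁺)`,
and `H⁺` is symmetric positive definite. -/
theorem ellipsoid_step_containment (n : ℕ) (hn : 2 ≤ n)
    (H : Matrix (Fin n) (Fin n) ℝ) (hH : H.PosDef)
    (c w : Fin n → ℝ) (hw : w ≠ 0) :
    (((n : ℝ) ^ 2 / ((n : ℝ) ^ 2 - 1)) •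
        (H - ((2 : ℝ) / ((n : ℝ) + 1)) •
          ((w ⬝ᵥ (H *ᵥ w))⁻¹ • vecMulVec (H *ᵥ w) (H *ᵥ w)))).PosDef ∧
    ∀ x : Fin n → ℝ,
      (H⁻¹ *ᵥ (x - c)) ⬝ᵥ (x - c) ≤ 1 → w ⬝ᵥ (x - c) ≤ 0 →
      ((((n : ℝ) ^ 2 / ((n : ℝ) ^ 2 - 1)) •
          (H - ((2 : ℝ) / ((n : ℝ) + 1)) •
            ((w ⬝ᵥ (H *ᵥ w))⁻¹ • vecMulVec (H *ᵥ w) (H *ᵥ w))))⁻¹ *ᵥ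
        (x - (c - ((1 : ℝ) / ((n : ℝ) + 1)) •
          ((Real.sqrt (w ⬝ᵥ (H *ᵥ w)))⁻¹ • (H *ᵥ w))))) ⬝ᵥ
        (x - (c - ((1 : ℝ) / ((n : ℝ) + 1)) •
          ((Real.sqrt (w ⬝ᵥ (H *ᵥ w)))⁻¹ • (H *ᵥ w)))) ≤ 1 := by
  have hN : (1 : ℝ) < n := by exact_mod_cast hn
  have hσ : 2 / ((n : ℝ) + 1) < 1 := by rw [div_lt_one (by positivity)]; linarith
  have hτ : 0 < (n : ℝ) ^ 2 / ((n : ℝ) ^ 2 - 1) := div_pos (by positivity) (by nlinarith)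
  have hdown := hH.sub_smul_vecMulVec_mulVec w hσ
  refine ⟨hdown.smul hτ, fun x hq ht => ?_⟩
  have hs : 0 < w ⬝ᵥ (H *ᵥ w) := by simpa using hH.dotProduct_mulVec_pos hw
  have hsymm : H.IsSymm := isHermitian_iff_isSymm.mp hH.1
  have hdet : IsUnit H.det := (isUnit_iff_isUnit_det H).mp hH.isUnit
  have : Invertible ((n : ℝ) ^ 2 / ((n : ℝ) ^ 2 - 1)) := invertibleOfNonzero hτ.ne'
  rw [Matrix.inv_smul _ _ ((isUnit_iff_isUnit_det _).mp hdown.isUnit), invOf_eq_inv,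
    hsymm.inv_sub_smul_vecMulVec_mulVec hdet hs.ne' hσ.ne]
  set r := √(w ⬝ᵥ (H *ᵥ w))
  have hshift : x - (c - (1 / ((n : ℝ) + 1)) • (r⁻¹ • (H *ᵥ w)))
      = (x - c) + (1 / ((n : ℝ) + 1) * r⁻¹) • (H *ᵥ w) := by
    rw [smul_smul]; abel
  rw [hshift]
  simp only [smul_mulVec, add_mulVec, vecMulVec_mulVec, smul_dotProduct, add_dotProduct,
    op_smul_eq_smul, smul_eq_mul]
  simp only [hsymm.inv_mulVec_add_smul_mulVec_dotProduct hdet, dotProduct_add, dotProduct_smul,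
    smul_eq_mul]
  have hr : 0 < r := Real.sqrt_pos.mpr hs
  have hsr : w ⬝ᵥ (H *ᵥ w) = r ^ 2 := (Real.sq_sqrt hs.le).symm
  have hcs := hH.dotProduct_sq_le_mul_inv_mulVec_dotProduct w (x - c)
  obtain ⟨u, hu⟩ : ∃ u, w ⬝ᵥ (x - c) = r * u := ⟨_, (mul_div_cancel₀ _ hr.ne').symm⟩
  simp only [hsr, hu] at hcs ht ⊢
  have huq := le_of_mul_le_mul_left (mul_pow r u 2 ▸ hcs) (pow_pos hr 2)
  convert ellipsoid_step_bound hN hq (nonpos_of_mul_nonpos_right ht hr) huq using 2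
  field_simp
  ring
end

section
/- Let n ≥ 2, let H be a symmetric positive definite n×n real matrix, c ∈ ℝⁿ, and w ∈ ℝⁿ with w ≠ 0. Define c⁺ = c − (1/(n+1))·Hw/√(⟨w, Hw⟩) and H⁺ = (n²/(n²−1))·(H − (2/(n+1))·(Hw)(Hw)ᵀ/⟨w, Hw⟩). Then the Lebesgue volumes of the ellipsoids satisfy vol(E(c⁺, H⁺)) ≤ e^{−1/(2n)} · vol(E(c, H)). -/
open Matrix MeasureTheory Real

/-!
With `σ = ⟨w, Hw⟩`, `a = √(n²/(n²-1))` and `t = √((n-1)/(n+1))`, the matrix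
`B = a (I - ((1 - t)/σ) (Hw) wᵀ)` (`ellipsoidStepMatrix H w a t`) satisfies `B H Bᵀ = H⁺`,
so `E(c⁺, H⁺)` is the image of `E(c, H)` under an affine map with linear part `B`, and the
volume ratio is `|det B| = aⁿ t` by the matrix determinant lemma.

With `x = 1/n` one has `log (aⁿ t) = -(n/2) ((1+x) log (1+x) + (1-x) log (1-x))`, and the bracket
is `∑ x^(2k+2) / ((2k+1)(k+1)) ≥ x²`, whence `aⁿ t ≤ exp (-1/(2n))`.
-/

section RankOne

variable {ι R : Type*} [Fintype ι] [DecidableEq ι] [CommRing R]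

theorem det_one_sub_vecMulVec (u v : ι → R) : (1 - vecMulVec u v).det = 1 - v ⬝ᵥ u := by
  rw [vecMulVec_eq Unit, det_one_sub_mul_comm, det_unique, Matrix.sub_apply, one_apply_eq,
    replicateRow_mul_replicateCol_apply]

theorem one_sub_vecMulVec_mul_mul_transpose {H : Matrix ι ι R} (hH : H.IsSymm) (w : ι → R)
    (g : R) :
    (1 - g • vecMulVec (H *ᵥ w) w) * H * (1 - g • vecMulVec (H *ᵥ w) w)ᵀ =
      H - (2 * g - g ^ 2 * (w ⬝ᵥ H *ᵥ w)) • vecMulVec (H *ᵥ w) (H *ᵥ w) := by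
  have hwH : w ᵥ* H = H *ᵥ w := by rw [← mulVec_transpose, hH.eq]
  simp only [transpose_sub, transpose_one, transpose_smul, transpose_vecMulVec, sub_mul, mul_sub,
    one_mul, mul_one, Matrix.smul_mul, Matrix.mul_smul, vecMulVec_mul, mul_vecMulVec,
    smul_mulVec, vecMulVec_mulVec, op_smul_eq_smul, smul_vecMulVec, hwH,
    dotProduct_comm (H *ᵥ w) w]
  module

end RankOne

section StepMatrix

variable {ι K : Type*} [Fintype ι] [DecidableEq ι] [Field K]

def ellipsoidStepMatrix (H : Matrix ι ι K) (w : ι → K) (a t : K) : Matrix ι ι K :=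
  a • (1 - ((1 - t) / (w ⬝ᵥ H *ᵥ w)) • vecMulVec (H *ᵥ w) w)

theorem ellipsoidStepMatrix_mul_mul_transpose {H : Matrix ι ι K} (hH : H.IsSymm) {w : ι → K}
    (hσ : w ⬝ᵥ H *ᵥ w ≠ 0) (a t : K) :
    ellipsoidStepMatrix H w a t * H * (ellipsoidStepMatrix H w a t)ᵀ =
      a ^ 2 • (H - (1 - t ^ 2) • ((w ⬝ᵥ H *ᵥ w)⁻¹ • vecMulVec (H *ᵥ w) (H *ᵥ w))) := by
  simp only [ellipsoidStepMatrix, transpose_smul, Matrix.smul_mul, Matrix.mul_smul, smul_smul,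
    one_sub_vecMulVec_mul_mul_transpose hH]
  congr 3
  · ring
  · field_simp
    ring

theorem det_ellipsoidStepMatrix (H : Matrix ι ι K) {w : ι → K} (hσ : w ⬝ᵥ H *ᵥ w ≠ 0) (a t : K) :
    (ellipsoidStepMatrix H w a t).det = a ^ Fintype.card ι * t := by
  rw [ellipsoidStepMatrix, det_smul, ← smul_vecMulVec, det_one_sub_vecMulVec, dotProduct_smul,
    smul_eq_mul, div_mul_cancel₀ _ hσ, sub_sub_cancel]

end StepMatrix

section Ellipsoid

variable {ι : Type*} [Fintype ι] [DecidableEq ι]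

def ellipsoid (c : ι → ℝ) (H : Matrix ι ι ℝ) : Set (ι → ℝ) :=
  {x | (H⁻¹ *ᵥ (x - c)) ⬝ᵥ (x - c) ≤ 1}

theorem ellipsoid_eq_preimage_sub (c : ι → ℝ) (H : Matrix ι ι ℝ) :
    ellipsoid c H = (· - c) ⁻¹' ellipsoid 0 H := by
  simp [ellipsoid]

theorem volume_ellipsoid_eq_volume_ellipsoid_zero (c : ι → ℝ) (H : Matrix ι ι ℝ) :
    volume (ellipsoid c H) = volume (ellipsoid 0 H) := by
  simp only [ellipsoid_eq_preimage_sub c, sub_eq_add_neg, measure_preimage_add_right]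

theorem ellipsoid_zero_mul_mul_transpose (B M : Matrix ι ι ℝ) :
    ellipsoid 0 (B * M * Bᵀ) = toLin' B⁻¹ ⁻¹' ellipsoid 0 M := by
  ext x
  simp only [ellipsoid, sub_zero, Set.mem_preimage, Set.mem_ofPred_eq, toLin'_apply]
  rw [Matrix.mul_inv_rev, Matrix.mul_inv_rev, ← transpose_nonsing_inv, ← mulVec_mulVec,
    ← mulVec_mulVec, mulVec_transpose, ← dotProduct_mulVec]

theorem volume_ellipsoid_mul_mul_transpose {B : Matrix ι ι ℝ} (hB : B.det ≠ 0)
    (M : Matrix ι ι ℝ) (c c' : ι → ℝ) :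
    volume (ellipsoid c' (B * M * Bᵀ)) = ENNReal.ofReal |B.det| * volume (ellipsoid c M) := by
  have hdet : LinearMap.det (toLin' B⁻¹) = B.det⁻¹ := by
    rw [LinearMap.det_toLin', det_nonsing_inv, Ring.inverse_eq_inv]
  rw [volume_ellipsoid_eq_volume_ellipsoid_zero c', volume_ellipsoid_eq_volume_ellipsoid_zero c,
    ellipsoid_zero_mul_mul_transpose, Measure.addHaar_preimage_linearMap _ (by simpa [hdet]),
    hdet, inv_inv]

end Ellipsoid

theorem sq_le_one_add_mul_log_add_one_sub_mul_log {x : ℝ} (hx : |x| < 1) :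
    x ^ 2 ≤ (1 + x) * log (1 + x) + (1 - x) * log (1 - x) := by
  have hx2 : |x ^ 2| < 1 := by rw [abs_pow]; exact pow_lt_one₀ (abs_nonneg x) hx two_ne_zero
  have hp : 0 < 1 + x := by linarith [neg_abs_le x]
  have hm : 0 < 1 - x := by linarith [le_abs_self x]
  have hlog : (1 + x) * log (1 + x) + (1 - x) * log (1 - x) =
      x * (log (1 + x) - log (1 - x)) - -log (1 - x ^ 2) := by
    rw [show 1 - x ^ 2 = (1 + x) * (1 - x) by ring, log_mul hp.ne' hm.ne']
    ring
  have hterm (k : ℕ) : x * (2 * (1 / (2 * k + 1)) * x ^ (2 * k + 1)) - (x ^ 2) ^ (k + 1) / (k + 1)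
      = (x ^ 2) ^ (k + 1) / ((2 * k + 1) * (k + 1)) := by
    field_simp
    ring
  have hsum := ((hasSum_log_sub_log_of_abs_lt_one hx).mul_left x).sub
    (hasSum_pow_div_log_of_abs_lt_one hx2)
  simp only [hterm, ← hlog] at hsum
  simpa using le_hasSum hsum 0 fun k _ => by positivity

theorem sqrt_pow_mul_sqrt_le_exp {n : ℕ} (hn : 2 ≤ n) :
    √((n : ℝ) ^ 2 / ((n : ℝ) ^ 2 - 1)) ^ n * √(((n : ℝ) - 1) / ((n : ℝ) + 1)) ≤
      exp (-1 / (2 * n)) := by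
  have hn' : (2 : ℝ) ≤ n := by exact_mod_cast hn
  have hn1 : (n : ℝ) - 1 ≠ 0 := by linarith
  have hn2 : (n : ℝ) ^ 2 - 1 ≠ 0 := by nlinarith
  set x : ℝ := 1 / n with hx
  have hx1 : |x| < 1 := by
    rw [abs_of_pos (by positivity), hx, div_lt_one (by positivity)]; linarith
  have hp : 0 < 1 + x := by positivity
  have hm : 0 < 1 - x := by linarith [le_abs_self x]
  have ha : (n : ℝ) ^ 2 / ((n : ℝ) ^ 2 - 1) = exp (-(log (1 + x) + log (1 - x))) := by
    rw [exp_neg, exp_add, exp_log hp, exp_log hm, hx]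
    field_simp
    ring
  have ht : ((n : ℝ) - 1) / ((n : ℝ) + 1) = exp (log (1 - x) - log (1 + x)) := by
    rw [exp_sub, exp_log hp, exp_log hm, hx]
    field_simp
  rw [ha, ht, ← exp_half, ← exp_half, ← exp_nat_mul, ← exp_add, exp_le_exp]
  have hnx : (n : ℝ) * x = 1 := by rw [hx]; field_simp
  have key : 1 / (n : ℝ) ≤ (n + 1) * log (1 + x) + (n - 1) * log (1 - x) :=
    calc 1 / (n : ℝ) = n * x ^ 2 := by rw [hx]; field_simp
      _ ≤ n * ((1 + x) * log (1 + x) + (1 - x) * log (1 - x)) :=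
        mul_le_mul_of_nonneg_left (sq_le_one_add_mul_log_add_one_sub_mul_log hx1) n.cast_nonneg
      _ = (n + 1) * log (1 + x) + (n - 1) * log (1 - x) := by
        linear_combination (log (1 + x) - log (1 - x)) * hnx
  have : -1 / (2 * (n : ℝ)) = -(1 / n) / 2 := by ring
  linarith

/-- one step of the ellipsoid method: the volume of the new ellipsoid
`E(c⁺, H⁺)` is at most `e^(−1/(2n))` times the volume of `E(c, H)`. -/
theorem ellipsoid_step_volume (n : ℕ) (hn : 2 ≤ n)
    (H : Matrix (Fin n) (Fin n) ℝ) (hH : H.PosDef)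
    (c w : Fin n → ℝ) (hw : w ≠ 0) :
    volume {x : Fin n → ℝ |
        ((((n : ℝ) ^ 2 / ((n : ℝ) ^ 2 - 1)) •
            (H - ((2 : ℝ) / ((n : ℝ) + 1)) •
              ((w ⬝ᵥ (H *ᵥ w))⁻¹ • vecMulVec (H *ᵥ w) (H *ᵥ w))))⁻¹ *ᵥ
          (x - (c - ((1 : ℝ) / ((n : ℝ) + 1)) •
            ((Real.sqrt (w ⬝ᵥ (H *ᵥ w)))⁻¹ • (H *ᵥ w))))) ⬝ᵥ
          (x - (c - ((1 : ℝ) / ((n : ℝ) + 1)) •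
            ((Real.sqrt (w ⬝ᵥ (H *ᵥ w)))⁻¹ • (H *ᵥ w)))) ≤ 1} ≤
      ENNReal.ofReal (Real.exp (-1 / (2 * (n : ℝ)))) *
        volume {x : Fin n → ℝ | (H⁻¹ *ᵥ (x - c)) ⬝ᵥ (x - c) ≤ 1} := by
  have hn' : (2 : ℝ) ≤ n := by exact_mod_cast hn
  have hσ : 0 < w ⬝ᵥ H *ᵥ w := by simpa using hH.dotProduct_mulVec_pos hw
  have hn2 : (0 : ℝ) < n ^ 2 - 1 := by nlinarith
  set a := √((n : ℝ) ^ 2 / ((n : ℝ) ^ 2 - 1))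
  set t := √(((n : ℝ) - 1) / ((n : ℝ) + 1))
  have ht : 0 < t := Real.sqrt_pos.2 (div_pos (by linarith) (by linarith))
  have ht2 : 2 / ((n : ℝ) + 1) = 1 - t ^ 2 := by
    rw [Real.sq_sqrt (div_nonneg (by linarith) (by linarith))]; field_simp; ring
  set B := ellipsoidStepMatrix H w a t
  have hconj : ((n : ℝ) ^ 2 / ((n : ℝ) ^ 2 - 1)) • (H - ((2 : ℝ) / ((n : ℝ) + 1)) •
      ((w ⬝ᵥ (H *ᵥ w))⁻¹ • vecMulVec (H *ᵥ w) (H *ᵥ w))) = B * H * Bᵀ := by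
    rw [ellipsoidStepMatrix_mul_mul_transpose (isHermitian_iff_isSymm.mp hH.isHermitian) hσ.ne',
      Real.sq_sqrt (by positivity), ht2]
  have hdet : B.det = a ^ n * t := by
    rw [det_ellipsoidStepMatrix H hσ.ne', Fintype.card_fin]
  have hdet_pos : 0 < B.det := by
    rw [hdet]; exact mul_pos (pow_pos (Real.sqrt_pos.2 (by positivity)) n) ht
  change volume (ellipsoid _ _) ≤ _ * volume (ellipsoid c H)
  rw [hconj, volume_ellipsoid_mul_mul_transpose hdet_pos.ne' H c, abs_of_pos hdet_pos, hdet]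
  gcongr
  exact sqrt_pow_mul_sqrt_le_exp hn
end

section
/- Let Q = ∏_{j=1}^{n} [a_j, b_j] ⊂ ℝⁿ be a box, let f be a convex continuously differentiable function on a neighborhood of Q, fix a coordinate index i and a number c ∈ [a_i, b_i], and let Q_k = {x ∈ Q : x_i = c}. If x_* is a minimizer of f over Q_k, then there exists a vector a ∈ N(x_* | Q) (the normal cone of Q at x_*) such that the vector g = ∇f(x_*) + a satisfies g_j = 0 for every coordinate j ≠ i. -/
/-!
The first-order optimality condition on the (convex) slice says that `Df(x_*)` is nonnegative on
every direction `y - x_*` with `y` in the slice. Take `v = -∇f(x_*)` with its `i`-th component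
set to zero. For `y ∈ Q`, replacing `y_i` by `x_*i` keeps `y` in the box and lands in the slice,
and `⟪v, y - x_*⟫` is exactly `-Df(x_*)` applied to this projected direction, hence `≤ 0`.
-/

open Matrix Set Function

section
variable {ι R : Type*} [DecidableEq ι]

theorem LinearMap.apply_eq_dotProduct [Fintype ι] [CommSemiring R] (L : (ι → R) →ₗ[R] R)
    (d : ι → R) :
    L d = (fun j => L (Pi.single j 1)) ⬝ᵥ d := by
  conv_lhs => rw [← Finset.univ_sum_single d]
  simp only [map_sum, dotProduct]
  refine Finset.sum_congr rfl fun j _ => ?_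
  rw [mul_comm, ← smul_eq_mul, ← map_smul, ← Pi.single_smul, smul_eq_mul, mul_one]

theorem update_zero_dotProduct [Fintype ι] [NonUnitalNonAssocSemiring R] (w d : ι → R) (i : ι) :
    update w i 0 ⬝ᵥ d = w ⬝ᵥ update d i 0 := by
  refine Finset.sum_congr rfl fun j _ => ?_
  rcases eq_or_ne j i with rfl | hj <;> simp [*]

theorem update_sub_self_eq [AddGroup R] (x y : ι → R) (i : ι) :
    update y i (x i) - x = update (y - x) i 0 := by
  rw [← sub_self (x i), update_sub, update_eq_self]

theorem neg_update_zero_dotProduct_sub_nonpos [Fintype ι] {s : ι → Set ℝ} {x y : ι → ℝ}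
    (hx : x ∈ univ.pi s) (hy : y ∈ univ.pi s) (i : ι) (L : (ι → ℝ) →ₗ[ℝ] ℝ)
    (hL : ∀ z ∈ univ.pi s, z i = x i → 0 ≤ L (z - x)) :
    -update (fun j => L (Pi.single j 1)) i 0 ⬝ᵥ (y - x) ≤ 0 := by
  have hproj : update y i (x i) ∈ univ.pi s :=
    (update_mem_pi_iff_of_mem hy).2 fun _ => hx i (mem_univ i)
  have hnonneg := hL _ hproj (update_self ..)
  rw [update_sub_self_eq, L.apply_eq_dotProduct, ← update_zero_dotProduct] at hnonneg
  rw [neg_dotProduct]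
  exact neg_nonpos.2 hnonneg

end

theorem IsMinOn.fderiv_sub_nonneg {E : Type*} [NormedAddCommGroup E] [NormedSpace ℝ E]
    {f : E → ℝ} {s : Set E} {x y : E} (hs : Convex ℝ s) (hx : x ∈ s) (hy : y ∈ s)
    (hmin : IsMinOn f s x) (hf : DifferentiableAt ℝ f x) : 0 ≤ fderiv ℝ f x (y - x) :=
  hmin.localize.hasFDerivWithinAt_nonneg hf.hasFDerivAt.hasFDerivWithinAt
    (sub_mem_posTangentConeAt_of_segment_subset (hs.segment_subset hx hy))

theorem exists_normal_cone_vector_killing_parallel_gradient_general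
    (n : ℕ) (a b : Fin n → ℝ)
    (Q : Set (Fin n → ℝ)) (hQ : Q = {x | ∀ j, x j ∈ Set.Icc (a j) (b j)})
    (U : Set (Fin n → ℝ)) (hU : IsOpen U) (hQU : Q ⊆ U)
    (f : (Fin n → ℝ) → ℝ) (hf : ContDiffOn ℝ 1 f U)
    (i : Fin n) (c : ℝ)
    (xstar : Fin n → ℝ) (hx1 : xstar ∈ Q) (hx2 : xstar i = c)
    (hmin : ∀ x ∈ Q, x i = c → f xstar ≤ f x) :
    ∃ v : Fin n → ℝ, (∀ y ∈ Q, v ⬝ᵥ (y - xstar) ≤ 0) ∧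
      ∀ j, j ≠ i → fderiv ℝ f xstar (Pi.single j 1) + v j = 0 := by
  obtain rfl : Q = univ.pi fun j => Icc (a j) (b j) := by simp [hQ, Set.pi]
  have hdiff : DifferentiableAt ℝ f xstar :=
    (hf.differentiableOn one_ne_zero xstar (hQU hx1)).differentiableAt (hU.mem_nhds (hQU hx1))
  have hslice_convex : Convex ℝ ((univ.pi fun j => Icc (a j) (b j)) ∩ {y | y i = xstar i}) :=
    (convex_pi fun j _ => convex_Icc (a j) (b j)).inter
      (convex_hyperplane (LinearMap.proj i).isLinear _)
  have hfirst_order : ∀ y ∈ univ.pi (fun j => Icc (a j) (b j)), y i = xstar i →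
      0 ≤ (fderiv ℝ f xstar : (Fin n → ℝ) →ₗ[ℝ] ℝ) (y - xstar) := fun y hy hyi =>
    IsMinOn.fderiv_sub_nonneg hslice_convex ⟨hx1, rfl⟩ ⟨hy, hyi⟩
      (fun z hz => hmin z hz.1 (hz.2.trans hx2)) hdiff
  exact ⟨_, fun y hy => neg_update_zero_dotProduct_sub_nonpos hx1 hy i _ hfirst_order,
    fun j hj => by simp [hj]⟩

/-- if `x_*` minimizes a convex continuously differentiable function `f`
over the slice `Q_k = {x ∈ Q : x_i = c}` of a box `Q`, then there exists a vector
`a` in the normal cone `N(x_* | Q)` such that `g = ∇f(x_*) + a` has zero components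
in every coordinate `j ≠ i`.  Here `(∇f(x_*))_j = Df(x_*)(e_j)`. -/
theorem exists_normal_cone_vector_killing_parallel_gradient
    (n : ℕ) (a b : Fin n → ℝ)
    (Q : Set (Fin n → ℝ)) (hQ : Q = {x | ∀ j, x j ∈ Set.Icc (a j) (b j)})
    (U : Set (Fin n → ℝ)) (hU : IsOpen U) (hUconv : Convex ℝ U) (hQU : Q ⊆ U)
    (f : (Fin n → ℝ) → ℝ) (hf : ContDiffOn ℝ 1 f U) (hconv : ConvexOn ℝ U f)
    (i : Fin n) (c : ℝ) (hc : c ∈ Set.Icc (a i) (b i))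
    (xstar : Fin n → ℝ) (hx1 : xstar ∈ Q) (hx2 : xstar i = c)
    (hmin : ∀ x ∈ Q, x i = c → f xstar ≤ f x) :
    ∃ v : Fin n → ℝ, (∀ y ∈ Q, v ⬝ᵥ (y - xstar) ≤ 0) ∧
      ∀ j, j ≠ i → fderiv ℝ f xstar (Pi.single j 1) + v j = 0 :=
  exists_normal_cone_vector_killing_parallel_gradient_general n a b Q hQ U hU hQU f hf i c xstar hx1
    hx2 hmin
end

section
/- Let Q = ∏_{j=1}^{n} [a_j, b_j] ⊂ ℝⁿ be a box and f a convex differentiable function with L-Lipschitz gradient (L > 0) on a neighborhood of Q. Fix a coordinate index i and c ∈ (a_i, b_i), and let Q_k = {x ∈ Q : x_i = c}. Let x_* be a minimizer of f over Q_k, and let x ∈ Q_k be a point with ‖x − x_*‖ ≤ |∂f/∂x_i(x)| / L. If ∂f/∂x_i(x) > 0, then min_{z ∈ Q, z_i ≤ c} f(z) = min_{z ∈ Q} f(z); that is, after discarding the part of the box where x_i > c, the remaining part still contains a minimizer of f over Q. -/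
/-!
Let `w` minimize `f` over the compact box `Q`; only the case `c < w i` needs an argument. The
Lipschitz bound gives `|∂ᵢf(x) - ∂ᵢf(x_*)| ≤ L ‖x - x_*‖ ≤ ∂ᵢf(x)`, so `∂ᵢf(x_*) ≥ 0`. Moving `w`
to the slice along `eᵢ` gives a point `w'` with `⟪∇f(x_*), w' - x_*⟫ ≥ 0` by first-order
optimality of `x_*` on the slice, and the remaining step `w - w' = (w i - c) eᵢ` pairs with
`∇f(x_*)` to `(w i - c) ∂ᵢf(x_*) ≥ 0`. The gradient inequality of the convex `f` then yields
`f(x_*) ≤ f(w)`, so `x_*` lies in the half-box `{z i ≤ c}` and minimizes `f` over `Q`.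
-/

open Set
open scoped RealInnerProductSpace

section FirstOrder

variable {E : Type*} [NormedAddCommGroup E] [InnerProductSpace ℝ E] [CompleteSpace E]
  {f : E → ℝ} {p q : E}

theorem ConvexOn.inner_gradient_le_sub {U : Set E} (hf : ConvexOn ℝ U f) (hp : p ∈ U)
    (hq : q ∈ U) (hd : DifferentiableAt ℝ f p) : ⟪gradient f p, q - p⟫ ≤ f q - f p := by
  have hline : HasDerivAt (f ∘ AffineMap.lineMap (k := ℝ) p q) ⟪gradient f p, q - p⟫ 0 := by
    have hd' : HasFDerivAt f (InnerProductSpace.toDual ℝ E (gradient f p))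
        (AffineMap.lineMap (k := ℝ) p q 0) := by
      simpa using hd.hasGradientAt.hasFDerivAt
    simpa using hd'.comp_hasDerivAt 0 (AffineMap.hasDerivAt_lineMap (𝕜 := ℝ))
  have h0 : (0 : ℝ) ∈ AffineMap.lineMap p q ⁻¹' U := by simpa using hp
  have h1 : (1 : ℝ) ∈ AffineMap.lineMap p q ⁻¹' U := by simpa using hq
  simpa [slope_def_field] using
    (hf.comp_affineMap (AffineMap.lineMap p q)).le_slope_of_hasDerivAt h0 h1 one_pos hline

theorem IsMinOn.inner_gradient_nonneg {K : Set E} (hK : Convex ℝ K) (hmin : IsMinOn f K p)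
    (hp : p ∈ K) (hq : q ∈ K) (hd : DifferentiableAt ℝ f p) : 0 ≤ ⟪gradient f p, q - p⟫ := by
  simpa using hmin.localize.hasFDerivWithinAt_nonneg
    hd.hasGradientAt.hasFDerivAt.hasFDerivWithinAt
    (sub_mem_posTangentConeAt_of_segment_subset (hK.segment_subset hp hq))

end FirstOrder

theorem PiLp.apply_nonneg_of_norm_sub_le {ι : Type*} [Fintype ι] {r : ENNReal} [Fact (1 ≤ r)]
    {u v : PiLp r fun _ : ι => ℝ} {i : ι} (h : ‖u - v‖ ≤ u i) : 0 ≤ v i := by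
  have hi := PiLp.norm_apply_le (u - v) i
  rw [PiLp.sub_apply, Real.norm_eq_abs] at hi
  linarith [le_abs_self (u i - v i)]

section Box

variable {ι : Type*}

def euclideanBox (a b : ι → ℝ) : Set (EuclideanSpace ℝ ι) := {x | ∀ j, x j ∈ Icc (a j) (b j)}

theorem convex_setOf_apply_eq (i : ι) (c : ℝ) :
    Convex ℝ {x : EuclideanSpace ℝ ι | x i = c} :=
  (convex_singleton c).linear_preimage (EuclideanSpace.proj (𝕜 := ℝ) i).toLinearMap

theorem euclideanBox_eq_preimage (a b : ι → ℝ) :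
    euclideanBox a b = EuclideanSpace.equiv ι ℝ ⁻¹' univ.pi fun j => Icc (a j) (b j) := by
  ext x
  simp only [euclideanBox, mem_ofPred_eq, mem_preimage, mem_univ_pi]
  rfl

theorem isCompact_euclideanBox (a b : ι → ℝ) : IsCompact (euclideanBox a b) := by
  rw [euclideanBox_eq_preimage]
  exact (EuclideanSpace.equiv ι ℝ).toHomeomorph.isCompact_preimage.mpr
    (isCompact_univ_pi fun j => isCompact_Icc)

theorem convex_euclideanBox (a b : ι → ℝ) : Convex ℝ (euclideanBox a b) := by
  rw [euclideanBox_eq_preimage]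
  exact (convex_pi fun j _ => convex_Icc (a j) (b j)).is_linear_preimage
    (EuclideanSpace.equiv ι ℝ).toLinearMap.isLinear

variable {a b : ι → ℝ}

theorem sub_single_mem_euclideanBox [DecidableEq ι] {w p : EuclideanSpace ℝ ι}
    (hw : w ∈ euclideanBox a b) (hp : p ∈ euclideanBox a b) (i : ι) :
    w - EuclideanSpace.single i (w i - p i) ∈ euclideanBox a b := by
  intro j
  by_cases hj : j = i
  · subst hj
    simpa using hp j
  · simpa [hj] using hw j

theorem ConvexOn.le_of_isMinOn_slice [Fintype ι] {U : Set (EuclideanSpace ℝ ι)}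
    {f : EuclideanSpace ℝ ι → ℝ} (hf : ConvexOn ℝ U f) (hQU : euclideanBox a b ⊆ U) {i : ι}
    {c : ℝ} {p w : EuclideanSpace ℝ ι} (hp : p ∈ euclideanBox a b) (hpc : p i = c)
    (hmin : IsMinOn f (euclideanBox a b ∩ {z | z i = c}) p) (hd : DifferentiableAt ℝ f p)
    (hgrad : 0 ≤ gradient f p i) (hw : w ∈ euclideanBox a b) (hcw : c ≤ w i) : f p ≤ f w := by
  classical
  set w' := w - EuclideanSpace.single i (w i - p i)
  have hw' : w' ∈ euclideanBox a b ∩ {z | z i = c} :=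
    ⟨sub_single_mem_euclideanBox hw hp i, by simp [w', hpc]⟩
  have hslice : 0 ≤ ⟪gradient f p, w' - p⟫ :=
    hmin.inner_gradient_nonneg ((convex_euclideanBox a b).inter (convex_setOf_apply_eq i c))
      ⟨hp, hpc⟩ hw' hd
  have hstep :
      ⟪gradient f p, EuclideanSpace.single i (w i - p i)⟫ = (w i - c) * gradient f p i := by
    rw [EuclideanSpace.inner_single_right, hpc, conj_trivial]
  have hsplit : ⟪gradient f p, w - p⟫ = ⟪gradient f p, w' - p⟫ + (w i - c) * gradient f p i := by
    rw [← hstep, ← inner_add_right]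
    congr 1
    simp only [w']
    abel
  have hdir : 0 ≤ (w i - c) * gradient f p i := mul_nonneg (sub_nonneg.mpr hcw) hgrad
  linarith [hf.inner_gradient_le_sub (hQU hp) (hQU hw) hd]

end Box

theorem dichotomy_half_box_contains_minimizer_general
    (n : ℕ) (L : ℝ) (hL : 0 < L) (a b : Fin n → ℝ)
    (Q : Set (EuclideanSpace ℝ (Fin n)))
    (hQ : Q = {x | ∀ j, x j ∈ Set.Icc (a j) (b j)})
    (U : Set (EuclideanSpace ℝ (Fin n)))
    (hQU : Q ⊆ U)
    (f : EuclideanSpace ℝ (Fin n) → ℝ)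
    (hdiff : ∀ x ∈ U, DifferentiableAt ℝ f x)
    (hconv : ConvexOn ℝ U f)
    (hlip : ∀ x ∈ U, ∀ y ∈ U, ‖gradient f x - gradient f y‖ ≤ L * ‖x - y‖)
    (i : Fin n) (c : ℝ)
    (xstar : EuclideanSpace ℝ (Fin n)) (hx1 : xstar ∈ Q) (hx2 : xstar i = c)
    (hmin : ∀ z ∈ Q, z i = c → f xstar ≤ f z)
    (x : EuclideanSpace ℝ (Fin n)) (hxQ : x ∈ Q)
    (hclose : ‖x - xstar‖ ≤ |gradient f x i| / L)
    (hpos : 0 < gradient f x i) :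
    ∃ z ∈ Q, z i ≤ c ∧ ∀ y ∈ Q, f z ≤ f y := by
  change Q = euclideanBox a b at hQ
  subst hQ
  have hgrad : 0 ≤ gradient f xstar i := by
    refine PiLp.apply_nonneg_of_norm_sub_le (u := gradient f x) ?_
    calc ‖gradient f x - gradient f xstar‖ ≤ L * ‖x - xstar‖ :=
          hlip x (hQU hxQ) xstar (hQU hx1)
      _ ≤ |gradient f x i| := (le_div_iff₀' hL).mp hclose
      _ = gradient f x i := abs_of_pos hpos
  have hcont : ContinuousOn f (euclideanBox a b) :=
    fun z hz => (hdiff z (hQU hz)).continuousAt.continuousWithinAt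
  obtain ⟨w, hw, hwmin⟩ := (isCompact_euclideanBox a b).exists_isMinOn ⟨xstar, hx1⟩ hcont
  by_cases hwc : w i ≤ c
  · exact ⟨w, hw, hwc, hwmin⟩
  · have hle : f xstar ≤ f w :=
      hconv.le_of_isMinOn_slice hQU hx1 hx2 (fun z hz => hmin z hz.1 hz.2)
        (hdiff xstar (hQU hx1)) hgrad hw (not_le.mp hwc).le
    exact ⟨xstar, hx1, hx2.le, fun y hy => hle.trans (hwmin hy)⟩

/-- in the multidimensional dichotomy method, if `x` is an accurate
enough approximation (`‖x − x_*‖ ≤ |∂f/∂x_i(x)|/L`) of the minimizer `x_*` of `f`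
over the slice `Q_k = {z ∈ Q : z_i = c}` of a box `Q`, and `∂f/∂x_i(x) > 0`, then
the half-box `{z ∈ Q : z_i ≤ c}` still contains a minimizer of `f` over `Q`. -/
theorem dichotomy_half_box_contains_minimizer
    (n : ℕ) (L : ℝ) (hL : 0 < L) (a b : Fin n → ℝ)
    (Q : Set (EuclideanSpace ℝ (Fin n)))
    (hQ : Q = {x | ∀ j, x j ∈ Set.Icc (a j) (b j)})
    (U : Set (EuclideanSpace ℝ (Fin n))) (hU : IsOpen U) (hUconv : Convex ℝ U)
    (hQU : Q ⊆ U)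
    (f : EuclideanSpace ℝ (Fin n) → ℝ)
    (hdiff : ∀ x ∈ U, DifferentiableAt ℝ f x)
    (hconv : ConvexOn ℝ U f)
    (hlip : ∀ x ∈ U, ∀ y ∈ U, ‖gradient f x - gradient f y‖ ≤ L * ‖x - y‖)
    (i : Fin n) (c : ℝ) (hc : c ∈ Set.Ioo (a i) (b i))
    (xstar : EuclideanSpace ℝ (Fin n)) (hx1 : xstar ∈ Q) (hx2 : xstar i = c)
    (hmin : ∀ z ∈ Q, z i = c → f xstar ≤ f z)
    (x : EuclideanSpace ℝ (Fin n)) (hxQ : x ∈ Q) (hxi : x i = c)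
    (hclose : ‖x - xstar‖ ≤ |gradient f x i| / L)
    (hpos : 0 < gradient f x i) :
    ∃ z ∈ Q, z i ≤ c ∧ ∀ y ∈ Q, f z ≤ f y :=
  dichotomy_half_box_contains_minimizer_general n L hL a b Q hQ U hQU f hdiff hconv hlip i c xstar
    hx1 hx2 hmin x hxQ hclose hpos
end

section
/- Let Q = ∏_{j=1}^{n} [a_j, b_j] ⊂ ℝⁿ be a box whose diameter (length of the diagonal) is at most R, and let f be a convex function on a neighborhood of Q that is M-Lipschitz and has L-Lipschitz gradient (M, L > 0). Fix a coordinate index i and c ∈ (a_i, b_i), let Q̃ = {x ∈ Q : x_i = c}, let x_* be a minimizer of f over Q̃, and let x ∈ Q̃ be a point with ‖x − x_*‖ ≤ Δ. Then f(x) − min_{z ∈ Q} f(z) ≤ M·Δ + (|∂f/∂x_i(x)| + L·Δ)·R. In particular, if Δ ≤ (ε − R·|∂f/∂x_i(x)|)/(M + L·R) for some ε > 0, then f(x) − min_{z ∈ Q} f(z) ≤ ε. -/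
/-!
Split `f x - f z` at the slice minimizer `x⋆`. Lipschitz continuity bounds `f x - f x⋆` by `M Δ`.
For `f x⋆ - f z`, move `z` along `eᵢ` onto the slice, giving `z'`: first-order optimality of `x⋆`
on the convex slice gives `⟪∇f x⋆, z' - x⋆⟫ ≥ 0`, so the supporting-hyperplane inequality at `x⋆`
leaves only the `eᵢ`-component, `f x⋆ - f z ≤ (x⋆ᵢ - zᵢ) ∂ᵢf(x⋆) ≤ R (|∂ᵢf(x)| + L Δ)`.
-/

open Set

section FirstOrder

variable {E : Type*} [NormedAddCommGroup E] [NormedSpace ℝ E] {f : E → ℝ} {s : Set E} {p q : E}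

theorem ConvexOn.add_fderiv_le (hf : ConvexOn ℝ s f) (hs : Convex ℝ s) (hp : p ∈ s) (hq : q ∈ s)
    (hfp : DifferentiableAt ℝ f p) : f p + fderiv ℝ f p (q - p) ≤ f q := by
  let ℓ : ℝ →ᵃ[ℝ] E := AffineMap.lineMap p q
  have hℓ : MapsTo ℓ (Icc 0 1) s := fun t ht =>
    hs.segment_subset hp hq (segment_eq_image_lineMap ℝ p q ▸ mem_image_of_mem _ ht)
  have hfℓ : HasFDerivAt f (fderiv ℝ f p) (ℓ 0) := by simpa [ℓ] using hfp.hasFDerivAt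
  have hconvℓ := (hf.comp_affineMap ℓ).subset hℓ.subset_preimage (convex_Icc 0 1)
  have hslope := hconvℓ.le_slope_of_hasDerivAt (left_mem_Icc.2 zero_le_one)
    (right_mem_Icc.2 zero_le_one) one_pos (hfℓ.comp_hasDerivAt 0 AffineMap.hasDerivAt_lineMap)
  simp only [ℓ, slope_def_field, Function.comp_apply, AffineMap.lineMap_apply_zero,
    AffineMap.lineMap_apply_one, sub_zero, div_one] at hslope
  linarith

theorem IsMinOn.fderiv_nonneg_of_convex (hmin : IsMinOn f s p) (hs : Convex ℝ s) (hp : p ∈ s)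
    (hq : q ∈ s) (hfp : DifferentiableAt ℝ f p) : 0 ≤ fderiv ℝ f p (q - p) :=
  hmin.localize.hasFDerivWithinAt_nonneg hfp.hasFDerivAt.hasFDerivWithinAt
    (sub_mem_posTangentConeAt_of_segment_subset (hs.segment_subset hp hq))

end FirstOrder

theorem fderiv_apply_eq_inner_gradient {E : Type*} [NormedAddCommGroup E] [InnerProductSpace ℝ E]
    [CompleteSpace E] (f : E → ℝ) (p v : E) : fderiv ℝ f p v = inner ℝ (gradient f p) v :=
  InnerProductSpace.toDual_symm_apply.symm

namespace EuclideanSpace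

variable {ι : Type*}

theorem abs_apply_le_norm [Fintype ι] (u : EuclideanSpace ℝ ι) (i : ι) : |u i| ≤ ‖u‖ :=
  PiLp.norm_apply_le u i

theorem abs_apply_le_abs_apply_add_norm_sub [Fintype ι] (u v : EuclideanSpace ℝ ι) (i : ι) :
    |u i| ≤ |v i| + ‖u - v‖ := by
  have := abs_sub_abs_le_abs_sub (u i) (v i)
  have := abs_apply_le_norm (u - v) i
  simp only [PiLp.sub_apply] at this
  linarith

theorem convex_box (a b : ι → ℝ) : Convex ℝ {x : EuclideanSpace ℝ ι | ∀ j, x j ∈ Icc (a j) (b j)} :=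
  fun _ hu _ hv _ _ hα hβ hαβ j => by simpa using convex_Icc _ _ (hu j) (hv j) hα hβ hαβ

theorem convex_coord_slice {s : Set (EuclideanSpace ℝ ι)} (hs : Convex ℝ s) (i : ι) (c : ℝ) :
    Convex ℝ (s ∩ {w | w i = c}) :=
  hs.inter (convex_hyperplane (proj i : EuclideanSpace ℝ ι →L[ℝ] ℝ).toLinearMap.isLinear c)

variable [DecidableEq ι]

theorem add_smul_single_mem_box {a b : ι → ℝ} {z : EuclideanSpace ℝ ι}
    (hz : z ∈ {x : EuclideanSpace ℝ ι | ∀ j, x j ∈ Icc (a j) (b j)}) {i : ι} {c : ℝ}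
    (hc : c ∈ Icc (a i) (b i)) :
    z + (c - z i) • single i 1 ∈ {x : EuclideanSpace ℝ ι | ∀ j, x j ∈ Icc (a j) (b j)} := by
  intro j
  rcases eq_or_ne j i with rfl | hji
  · simpa using hc
  · simpa [PiLp.single_apply, hji] using hz j

end EuclideanSpace

open EuclideanSpace in
theorem ConvexOn.sub_le_of_isMinOn_coord_slice {ι : Type*} [Fintype ι] [DecidableEq ι]
    {f : EuclideanSpace ℝ ι → ℝ} {U S : Set (EuclideanSpace ℝ ι)} {xstar z : EuclideanSpace ℝ ι}
    {i : ι} (hf : ConvexOn ℝ U f) (hU : Convex ℝ U) (hS : Convex ℝ S) (hSU : S ⊆ U)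
    (hmin : IsMinOn f S xstar) (hxstar : xstar ∈ S) (hdiff : DifferentiableAt ℝ f xstar)
    (hz : z ∈ U) (hz' : z + (xstar i - z i) • single i 1 ∈ S) :
    f xstar - f z ≤ (xstar i - z i) * gradient f xstar i := by
  set z' := z + (xstar i - z i) • single i (1 : ℝ)
  have hsupport := hf.add_fderiv_le hU (hSU hxstar) hz hdiff
  have hoptimal := hmin.fderiv_nonneg_of_convex hS hxstar hz' hdiff
  have hsplit : z - xstar = (z' - xstar) - (xstar i - z i) • single i 1 := by
    simp only [z']; abel
  have hcoord : fderiv ℝ f xstar ((xstar i - z i) • single i 1)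
      = (xstar i - z i) * gradient f xstar i := by
    rw [fderiv_apply_eq_inner_gradient, real_inner_smul_right, inner_single_right]
    simp
  rw [hsplit, map_sub, hcoord] at hsupport
  linarith

theorem dichotomy_stopping_criterion_general
    (n : ℕ) (M L R Δ : ℝ) (hM : 0 < M) (hL : 0 < L) (a b : Fin n → ℝ)
    (Q : Set (EuclideanSpace ℝ (Fin n)))
    (hQ : Q = {x | ∀ j, x j ∈ Set.Icc (a j) (b j)})
    (hdiam : ∀ p ∈ Q, ∀ q ∈ Q, ‖p - q‖ ≤ R)
    (U : Set (EuclideanSpace ℝ (Fin n))) (hUconv : Convex ℝ U)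
    (hQU : Q ⊆ U)
    (f : EuclideanSpace ℝ (Fin n) → ℝ)
    (hdiff : ∀ x ∈ U, DifferentiableAt ℝ f x)
    (hconv : ConvexOn ℝ U f)
    (hMlip : ∀ p ∈ U, ∀ q ∈ U, |f p - f q| ≤ M * ‖p - q‖)
    (hlip : ∀ p ∈ U, ∀ q ∈ U, ‖gradient f p - gradient f q‖ ≤ L * ‖p - q‖)
    (i : Fin n) (c : ℝ)
    (xstar : EuclideanSpace ℝ (Fin n)) (hx1 : xstar ∈ Q) (hx2 : xstar i = c)
    (hmin : ∀ z ∈ Q, z i = c → f xstar ≤ f z)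
    (x : EuclideanSpace ℝ (Fin n)) (hxQ : x ∈ Q)
    (hclose : ‖x - xstar‖ ≤ Δ) :
    (∀ z ∈ Q, f x - f z ≤ M * Δ + (|gradient f x i| + L * Δ) * R) ∧
      ∀ ε : ℝ, 0 < ε → Δ ≤ (ε - R * |gradient f x i|) / (M + L * R) →
        ∀ z ∈ Q, f x - f z ≤ ε := by
  have hR : 0 ≤ R := by simpa using hdiam x hxQ x hxQ
  have hval : f x - f xstar ≤ M * Δ :=
    (le_abs_self _).trans ((hMlip x (hQU hxQ) xstar (hQU hx1)).trans (by gcongr))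
  have hgrad : |gradient f xstar i| ≤ |gradient f x i| + L * Δ := calc
    _ ≤ |gradient f x i| + ‖gradient f xstar - gradient f x‖ :=
      EuclideanSpace.abs_apply_le_abs_apply_add_norm_sub _ _ i
    _ ≤ |gradient f x i| + L * ‖xstar - x‖ := by gcongr; exact hlip xstar (hQU hx1) x (hQU hxQ)
    _ ≤ |gradient f x i| + L * Δ := by rw [norm_sub_rev] at hclose; gcongr
  have hbound : ∀ z ∈ Q, f x - f z ≤ M * Δ + (|gradient f x i| + L * Δ) * R := by
    intro z hz
    subst hQ
    have hslice := hconv.sub_le_of_isMinOn_coord_slice hUconv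
      (EuclideanSpace.convex_coord_slice (EuclideanSpace.convex_box a b) i c)
      (inter_subset_left.trans hQU) (fun w hw => hmin w hw.1 hw.2) ⟨hx1, hx2⟩
      (hdiff xstar (hQU hx1)) (hQU hz)
      ⟨EuclideanSpace.add_smul_single_mem_box hz (hx1 i), by simp [hx2]⟩
    have hcoord : |xstar i - z i| ≤ R := by
      simpa using (EuclideanSpace.abs_apply_le_norm (xstar - z) i).trans (hdiam xstar hx1 z hz)
    calc f x - f z = (f x - f xstar) + (f xstar - f z) := by ring
      _ ≤ M * Δ + |xstar i - z i| * |gradient f xstar i| := by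
        rw [← abs_mul]; exact add_le_add hval (hslice.trans (le_abs_self _))
      _ ≤ M * Δ + R * (|gradient f x i| + L * Δ) := by gcongr
      _ = M * Δ + (|gradient f x i| + L * Δ) * R := by ring
  refine ⟨hbound, fun ε _ hΔ z hz => ?_⟩
  have hΔ' := (le_div_iff₀ (by positivity : 0 < M + L * R)).mp hΔ
  linarith [hbound z hz]

/-- stopping criterion for the multidimensional dichotomy.  If `x`
approximates within `Δ` (in argument) the minimizer `x_*` of `f` over a slice
`Q̃ = {z ∈ Q : z_i = c}` of a box `Q` of diameter at most `R`, then
`f(x) − min_Q f ≤ M·Δ + (|∂f/∂x_i(x)| + L·Δ)·R`; in particular, if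
`Δ ≤ (ε − R·|∂f/∂x_i(x)|)/(M + L·R)` for some `ε > 0`, then `f(x) − min_Q f ≤ ε`. -/
theorem dichotomy_stopping_criterion
    (n : ℕ) (M L R Δ : ℝ) (hM : 0 < M) (hL : 0 < L) (a b : Fin n → ℝ)
    (Q : Set (EuclideanSpace ℝ (Fin n)))
    (hQ : Q = {x | ∀ j, x j ∈ Set.Icc (a j) (b j)})
    (hdiam : ∀ p ∈ Q, ∀ q ∈ Q, ‖p - q‖ ≤ R)
    (U : Set (EuclideanSpace ℝ (Fin n))) (hU : IsOpen U) (hUconv : Convex ℝ U)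
    (hQU : Q ⊆ U)
    (f : EuclideanSpace ℝ (Fin n) → ℝ)
    (hdiff : ∀ x ∈ U, DifferentiableAt ℝ f x)
    (hconv : ConvexOn ℝ U f)
    (hMlip : ∀ p ∈ U, ∀ q ∈ U, |f p - f q| ≤ M * ‖p - q‖)
    (hlip : ∀ p ∈ U, ∀ q ∈ U, ‖gradient f p - gradient f q‖ ≤ L * ‖p - q‖)
    (i : Fin n) (c : ℝ) (hc : c ∈ Set.Ioo (a i) (b i))
    (xstar : EuclideanSpace ℝ (Fin n)) (hx1 : xstar ∈ Q) (hx2 : xstar i = c)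
    (hmin : ∀ z ∈ Q, z i = c → f xstar ≤ f z)
    (x : EuclideanSpace ℝ (Fin n)) (hxQ : x ∈ Q) (hxi : x i = c)
    (hclose : ‖x - xstar‖ ≤ Δ) :
    (∀ z ∈ Q, f x - f z ≤ M * Δ + (|gradient f x i| + L * Δ) * R) ∧
      ∀ ε : ℝ, 0 < ε → Δ ≤ (ε - R * |gradient f x i|) / (M + L * R) →
        ∀ z ∈ Q, f x - f z ≤ ε :=
  dichotomy_stopping_criterion_general n M L R Δ hM hL a b Q hQ hdiam U hUconv hQU f hdiff hconv
    hMlip hlip i c xstar hx1 hx2 hmin x hxQ hclose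
end

section
/- Let f : ℝᵐ → ℝ be bounded below and g : ℝᵐ → ℝⁿ. Define the dual function φ(y) = inf_{x ∈ ℝᵐ} ( f(x) + ⟨y, g(x)⟩ ) for y ∈ ℝⁿ with y ≥ 0 componentwise. Suppose there is a Slater point x₀ with g_k(x₀) < 0 for all k = 1, …, n, and set γ = min_k ( −g_k(x₀) ) > 0. If y_* ≥ 0 satisfies φ(y_*) ≥ φ(y) for all y ≥ 0 (in particular φ(y_*) ≥ φ(0) = inf_x f(x)), then ‖y_*‖₁ ≤ (1/γ)·( f(x₀) − inf_{x ∈ ℝᵐ} f(x) ). -/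
/-!
Comparing the optimal multiplier with `y = 0` gives
`inf f ≤ φ(0) ≤ φ(y_*) ≤ f(x₀) + ⟨y_*, g(x₀)⟩`, while `y_* ≥ 0` and `-g_k(x₀) ≥ γ` give
`⟨y_*, -g(x₀)⟩ ≥ γ ‖y_*‖₁`.
-/

open Set

section DualFunction

variable {α ι : Type*} [Fintype ι]

noncomputable def dualFunction (f : α → ℝ) (g : α → ι → ℝ) (y : ι → ℝ) : EReal :=
  ⨅ x, ((f x + ∑ k, y k * g x k : ℝ) : EReal)

theorem sInf_range_le_dualFunction_zero {f : α → ℝ} (hf : BddBelow (range f))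
    (g : α → ι → ℝ) : ((sInf (range f) : ℝ) : EReal) ≤ dualFunction f g 0 :=
  le_iInf fun x => by simpa using csInf_le hf ⟨x, rfl⟩

theorem dualFunction_le (f : α → ℝ) (g : α → ι → ℝ) (y : ι → ℝ) (x : α) :
    dualFunction f g y ≤ ((f x + ∑ k, y k * g x k : ℝ) : EReal) :=
  iInf_le _ x

theorem sInf_range_le_of_dualFunction_zero_le {f : α → ℝ} (hf : BddBelow (range f))
    {g : α → ι → ℝ} {y : ι → ℝ} (hopt : dualFunction f g 0 ≤ dualFunction f g y) (x₀ : α) :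
    sInf (range f) ≤ f x₀ + ∑ k, y k * g x₀ k :=
  EReal.coe_le_coe_iff.1 <|
    (sInf_range_le_dualFunction_zero hf g).trans (hopt.trans (dualFunction_le f g y x₀))

theorem mul_sum_le_neg_sum_mul {γ : ℝ} {c y : ι → ℝ} (hγ : ∀ k, γ ≤ -c k)
    (hy : ∀ k, 0 ≤ y k) : γ * ∑ k, y k ≤ -∑ k, y k * c k := by
  rw [Finset.mul_sum, ← Finset.sum_neg_distrib]
  gcongr with k
  nlinarith [hγ k, hy k]

end DualFunction

theorem dual_multiplier_l1_bound_general
    (m n : ℕ)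
    (f : (Fin m → ℝ) → ℝ) (hbdd : BddBelow (Set.range f))
    (g : (Fin m → ℝ) → Fin n → ℝ)
    (x₀ : Fin m → ℝ)
    (γ : ℝ) (hγ : IsLeast (Set.range fun k => -g x₀ k) γ) (hγpos : 0 < γ)
    (ystar : Fin n → ℝ) (hys : ∀ k, 0 ≤ ystar k)
    (hopt : ∀ y : Fin n → ℝ, (∀ k, 0 ≤ y k) →
      (⨅ x : Fin m → ℝ, ((f x + ∑ k, y k * g x k : ℝ) : EReal)) ≤
        ⨅ x : Fin m → ℝ, ((f x + ∑ k, ystar k * g x k : ℝ) : EReal)) :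
    ∑ k, |ystar k| ≤ 1 / γ * (f x₀ - sInf (Set.range f)) := by
  have hweak : sInf (range f) ≤ f x₀ + ∑ k, ystar k * g x₀ k :=
    sInf_range_le_of_dualFunction_zero_le hbdd (hopt 0 fun _ => le_rfl) x₀
  have hslater : γ * ∑ k, ystar k ≤ -∑ k, ystar k * g x₀ k :=
    mul_sum_le_neg_sum_mul (fun k => hγ.2 ⟨k, rfl⟩) hys
  rw [Finset.sum_congr rfl fun k _ => abs_of_nonneg (hys k), one_div_mul_eq_div,
    le_div_iff₀ hγpos, mul_comm]
  linarith

/-- bound on the ℓ₁-norm of an optimal dual multiplier under the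
Slater condition: `‖y_*‖₁ ≤ (1/γ)·(f(x₀) − inf f)`, where
`γ = min_k (−g_k(x₀)) > 0` and `φ(y) = inf_x (f(x) + ⟨y, g(x)⟩)` (computed in `EReal`). -/
theorem dual_multiplier_l1_bound
    (m n : ℕ)
    (f : (Fin m → ℝ) → ℝ) (hbdd : BddBelow (Set.range f))
    (g : (Fin m → ℝ) → Fin n → ℝ)
    (x₀ : Fin m → ℝ) (hx₀ : ∀ k, g x₀ k < 0)
    (γ : ℝ) (hγ : IsLeast (Set.range fun k => -g x₀ k) γ) (hγpos : 0 < γ)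
    (ystar : Fin n → ℝ) (hys : ∀ k, 0 ≤ ystar k)
    (hopt : ∀ y : Fin n → ℝ, (∀ k, 0 ≤ y k) →
      (⨅ x : Fin m → ℝ, ((f x + ∑ k, y k * g x k : ℝ) : EReal)) ≤
        ⨅ x : Fin m → ℝ, ((f x + ∑ k, ystar k * g x k : ℝ) : EReal)) :
    ∑ k, |ystar k| ≤ 1 / γ * (f x₀ - sInf (Set.range f)) :=
  dual_multiplier_l1_bound_general m n f hbdd g x₀ γ hγ hγpos ystar hys hopt
end

section
/- Let Q_x ⊆ ℝⁿ and Q_y ⊆ ℝᵐ be convex sets, and let F : Q_x × Q_y → ℝ be convex in x for each y and μ_y-strongly concave in y for each x, differentiable, and satisfy for all x, x′ ∈ Q_x and y, y′ ∈ Q_y: ‖∇_x F(x, y) − ∇_x F(x′, y)‖ ≤ L_{xx}‖x − x′‖, ‖∇_x F(x, y) − ∇_x F(x, y′)‖ ≤ L_{xy}‖y − y′‖, and ‖∇_y F(x, y) − ∇_y F(x′, y)‖ ≤ L_{xy}‖x − x′‖. Define s(x) = max_{y ∈ Q_y} F(x, y) and L = L_{xx} + 2L_{xy}²/μ_y. If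 z ∈ Q_x and ỹ(z) ∈ Q_y satisfies s(z) − F(z, ỹ(z)) ≤ ε_y, then for all x ∈ Q_x: 0 ≤ s(x) − F(z, ỹ(z)) − ⟨∇_x F(z, ỹ(z)), x − z⟩ ≤ L‖x − z‖² + 2ε_y. -/
/-! Let `p`, `q` be the exact maximizers of `F x ·` and `F z ·`. The lower bound is the gradient
inequality for the convex `F · ỹ` together with `F x ỹ ≤ s x`. For the upper bound split
`s x - F z ỹ - ⟪Gx z ỹ, x - z⟫` into the linearization error of `F · p` at `z` (at most
`Lxx ‖x - z‖²`), the gap `F z p - F z ỹ ≤ ε_y`, and `⟪Gx z p - Gx z ỹ, x - z⟫`, which is at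
most `Lxy (‖p - q‖ + ‖q - ỹ‖) ‖x - z‖`. Strong concavity makes the maximizer Lipschitz in the
parameter, `μ_y ‖p - q‖ ≤ Lxy ‖x - z‖`, and forces `μ_y / 2 ‖q - ỹ‖² ≤ ε_y`; Young's inequality
turns the last term into `2 Lxy² / μ_y ‖x - z‖² + ε_y`. -/

open RealInnerProductSpace Set Filter Topology

section

variable {E : Type*} [NormedAddCommGroup E] [InnerProductSpace ℝ E]

lemma strongConcaveOn_iff_convexOn_neg_sub {Q : Set E} {μ : ℝ} {f : E → ℝ} :
    StrongConcaveOn Q μ f ↔ ConvexOn ℝ Q fun y => -f y - μ / 2 * ‖y‖ ^ 2 := by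
  rw [strongConcaveOn_iff_convex, ← neg_convexOn_iff]
  congr! 2 with y
  simp only [Pi.neg_apply]
  ring

lemma StrongConcaveOn.add_sq_norm_sub_le_of_isMaxOn {Q : Set E} {μ : ℝ} {f : E → ℝ} {v y : E}
    (hf : StrongConcaveOn Q μ f) (hmax : IsMaxOn f Q v) (hv : v ∈ Q) (hy : y ∈ Q) :
    f y + μ / 2 * ‖y - v‖ ^ 2 ≤ f v := by
  -- compare `f v` with `f` at `(1 - b) • y + b • v`, then let `b → 1`
  have hnear : ∀ b ∈ Ioo (0 : ℝ) 1, f y + μ / 2 * b * ‖y - v‖ ^ 2 ≤ f v := by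
    intro b hb
    have ha : (0 : ℝ) < 1 - b := by linarith [hb.2]
    have hconc := hf.2 hy hv ha.le hb.1.le (by ring)
    have hle : f ((1 - b) • y + b • v) ≤ f v := hmax (hf.1 hy hv ha.le hb.1.le (by ring))
    simp only [smul_eq_mul] at hconc
    nlinarith
  have hlim : Tendsto (fun b : ℝ => f y + μ / 2 * b * ‖y - v‖ ^ 2) (𝓝[<] 1)
      (𝓝 (f y + μ / 2 * 1 * ‖y - v‖ ^ 2)) :=
    ((continuous_const.add ((continuous_const.mul continuous_id).mul continuous_const)).tendsto
      1).mono_left nhdsWithin_le_nhds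
  simpa using le_of_tendsto hlim (mem_of_superset (Ioo_mem_nhdsLT zero_lt_one) hnear)

variable [CompleteSpace E]

lemma HasGradientAt.sub {f h : E → ℝ} {f' h' x : E} (hf : HasGradientAt f f' x)
    (hh : HasGradientAt h h' x) : HasGradientAt (fun u => f u - h u) (f' - h') x := by
  rw [hasGradientAt_iff_hasFDerivAt, map_sub]
  exact hf.hasFDerivAt.sub hh.hasFDerivAt

lemma hasGradientAt_inner_left (c x : E) : HasGradientAt (fun u => ⟪c, u⟫) c x := by
  rw [hasGradientAt_iff_hasFDerivAt]
  exact (InnerProductSpace.toDual ℝ E c).hasFDerivAt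

lemma HasGradientAt.hasDerivAt_lineMap {f : E → ℝ} {g z x : E} (hg : HasGradientAt f g z) :
    HasDerivAt (fun t : ℝ => f (AffineMap.lineMap z x t)) ⟪g, x - z⟫ 0 := by
  have hline : HasDerivAt (fun t : ℝ => AffineMap.lineMap z x t) (x - z) 0 :=
    AffineMap.hasDerivAt_lineMap
  have hfz : HasFDerivAt f (InnerProductSpace.toDual ℝ E g) (AffineMap.lineMap z x (0 : ℝ)) := by
    simpa using hg.hasFDerivAt
  have h := hfz.comp_hasDerivAt 0 hline
  rwa [InnerProductSpace.toDual_apply_apply] at h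

lemma ConvexOn.add_inner_gradient_le {Q : Set E} {f : E → ℝ} {g z x : E}
    (hf : ConvexOn ℝ Q f) (hg : HasGradientAt f g z) (hz : z ∈ Q) (hx : x ∈ Q) :
    f z + ⟪g, x - z⟫ ≤ f x := by
  have hmaps : MapsTo (AffineMap.lineMap z x) (Icc (0 : ℝ) 1) Q := by
    simpa only [mapsTo_iff_image_subset, ← segment_eq_image_lineMap]
      using hf.1.segment_subset hz hx
  have hline := (hf.comp_affineMap (AffineMap.lineMap z x)).subset hmaps (convex_Icc 0 1)
  have := hline.le_slope_of_hasDerivAt (left_mem_Icc.2 zero_le_one)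
    (right_mem_Icc.2 zero_le_one) zero_lt_one hg.hasDerivAt_lineMap
  simp only [slope_def_field, Function.comp_apply, AffineMap.lineMap_apply_one,
    AffineMap.lineMap_apply_zero, sub_zero, div_one] at this
  linarith

lemma Convex.norm_image_sub_le_of_norm_hasGradientAt_le {Q : Set E} {f : E → ℝ} {g : E → E}
    {C : ℝ} {x y : E} (hQ : Convex ℝ Q) (hf : ∀ u ∈ Q, HasGradientAt f (g u) u)
    (hg : ∀ u ∈ Q, ‖g u‖ ≤ C) (hx : x ∈ Q) (hy : y ∈ Q) : ‖f y - f x‖ ≤ C * ‖y - x‖ :=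
  hQ.norm_image_sub_le_of_norm_hasFDerivWithin_le
    (fun u hu => (hf u hu).hasFDerivAt.hasFDerivWithinAt)
    (fun u hu => by simpa using hg u hu) hx hy

lemma StrongConcaveOn.mul_norm_sub_le_of_isMaxOn {Q : Set E} {μ C : ℝ} {f g : E → ℝ}
    {G : E → E} {p q : E} (hf : StrongConcaveOn Q μ f) (hg : StrongConcaveOn Q μ g)
    (hq : q ∈ Q) (hp : p ∈ Q) (hfq : IsMaxOn f Q q) (hgp : IsMaxOn g Q p)
    (hG : ∀ u ∈ Q, HasGradientAt (fun y => g y - f y) (G u) u) (hGC : ∀ u ∈ Q, ‖G u‖ ≤ C) :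
    μ * ‖p - q‖ ≤ C := by
  -- the quadratic growth of `f` at `q` and of `g` at `p` add up to `μ ‖p - q‖² ≤ C ‖p - q‖`
  have h₁ := hf.add_sq_norm_sub_le_of_isMaxOn hfq hq hp
  have h₂ := hg.add_sq_norm_sub_le_of_isMaxOn hgp hp hq
  rw [norm_sub_rev] at h₂
  have hlip := (le_abs_self _).trans (hf.1.norm_image_sub_le_of_norm_hasGradientAt_le hG hGC hq hp)
  rcases (norm_nonneg (p - q)).eq_or_lt with hpq | hpq
  · rw [← hpq, mul_zero]
    exact (norm_nonneg _).trans (hGC p hp)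
  · nlinarith

lemma sub_sub_inner_gradient_le_mul_sq {f : E → ℝ} {g : E → E} {L : ℝ} {z x : E}
    (hf : ∀ u ∈ segment ℝ z x, HasGradientAt f (g u) u)
    (hg : ∀ u ∈ segment ℝ z x, ‖g u - g z‖ ≤ L * ‖u - z‖) :
    f x - f z - ⟪g z, x - z⟫ ≤ L * ‖x - z‖ ^ 2 := by
  have hLx : 0 ≤ L * ‖x - z‖ := (norm_nonneg _).trans (hg x (right_mem_segment ℝ z x))
  have hbound : ∀ u ∈ segment ℝ z x, ‖g u - g z‖ ≤ L * ‖x - z‖ := by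
    rintro u ⟨a, b, ha, hb, hab, rfl⟩
    have hu : a • z + b • x - z = b • (x - z) := by
      rw [eq_sub_of_add_eq hab]; module
    calc ‖g (a • z + b • x) - g z‖ ≤ L * ‖a • z + b • x - z‖ := hg _ ⟨a, b, ha, hb, hab, rfl⟩
      _ = b * (L * ‖x - z‖) := by rw [hu, norm_smul, Real.norm_of_nonneg hb]; ring
      _ ≤ L * ‖x - z‖ := mul_le_of_le_one_left hLx (by linarith)
  have := (convex_segment z x).norm_image_sub_le_of_norm_hasGradientAt_le
    (fun u hu => (hf u hu).sub (hasGradientAt_inner_left (g z) u)) hbound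
    (left_mem_segment ℝ z x) (right_mem_segment ℝ z x)
  rw [inner_sub_right, sq, ← mul_assoc]
  exact (le_abs_self _).trans (by simpa [sub_sub_sub_comm] using this)

end

lemma mul_mul_add_le_two_mul_sq_div_mul_sq_add {μ L d a b ε : ℝ} (hμ : 0 < μ) (ha : 0 ≤ a)
    (hLa : μ * a ≤ L * d) (hb : μ / 2 * b ^ 2 ≤ ε) :
    L * d * (a + b) ≤ 2 * L ^ 2 / μ * d ^ 2 + ε := by
  rw [div_mul_eq_mul_div, div_add' _ _ _ hμ.ne', le_div_iff₀ hμ]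
  have hLd : 0 ≤ L * d := (mul_nonneg hμ.le ha).trans hLa
  nlinarith [sq_nonneg (2 * (L * d) - μ * b), mul_le_mul_of_nonneg_left hLa hLd,
    mul_le_mul_of_nonneg_left hb hμ.le, mul_nonneg hμ.le (sq_nonneg b)]

theorem max_function_inexact_model_general
    (n m : ℕ) (μy Lxx Lxy εy : ℝ) (hμ : 0 < μy)
    (Qx : Set (EuclideanSpace ℝ (Fin n))) (Qy : Set (EuclideanSpace ℝ (Fin m)))
    (hQx : Convex ℝ Qx)
    (F : EuclideanSpace ℝ (Fin n) → EuclideanSpace ℝ (Fin m) → ℝ)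
    (hconvx : ∀ y ∈ Qy, ConvexOn ℝ Qx (fun x => F x y))
    (hconcy : ∀ x ∈ Qx, ConvexOn ℝ Qy (fun y => -F x y - μy / 2 * ‖y‖ ^ 2))
    (Gx : EuclideanSpace ℝ (Fin n) → EuclideanSpace ℝ (Fin m) →
      EuclideanSpace ℝ (Fin n))
    (Gy : EuclideanSpace ℝ (Fin n) → EuclideanSpace ℝ (Fin m) →
      EuclideanSpace ℝ (Fin m))
    (hGx : ∀ x ∈ Qx, ∀ y ∈ Qy, HasGradientAt (fun x' => F x' y) (Gx x y) x)
    (hGy : ∀ x ∈ Qx, ∀ y ∈ Qy, HasGradientAt (fun y' => F x y') (Gy x y) y)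
    (hxx : ∀ x ∈ Qx, ∀ x' ∈ Qx, ∀ y ∈ Qy, ‖Gx x y - Gx x' y‖ ≤ Lxx * ‖x - x'‖)
    (hxy : ∀ x ∈ Qx, ∀ y ∈ Qy, ∀ y' ∈ Qy, ‖Gx x y - Gx x y'‖ ≤ Lxy * ‖y - y'‖)
    (hyx : ∀ x ∈ Qx, ∀ x' ∈ Qx, ∀ y ∈ Qy, ‖Gy x y - Gy x' y‖ ≤ Lxy * ‖x - x'‖)
    (s : EuclideanSpace ℝ (Fin n) → ℝ)
    (hs : ∀ x ∈ Qx, IsGreatest ((F x) '' Qy) (s x))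
    (z : EuclideanSpace ℝ (Fin n)) (hz : z ∈ Qx)
    (yt : EuclideanSpace ℝ (Fin m)) (hyt : yt ∈ Qy)
    (hacc : s z - F z yt ≤ εy) :
    ∀ x ∈ Qx,
      0 ≤ s x - F z yt - ⟪Gx z yt, x - z⟫ ∧
        s x - F z yt - ⟪Gx z yt, x - z⟫ ≤
          (Lxx + 2 * Lxy ^ 2 / μy) * ‖x - z‖ ^ 2 + 2 * εy := by
  intro x hx
  have hle : ∀ w ∈ Qx, ∀ y ∈ Qy, F w y ≤ s w := fun w hw y hy => (hs w hw).2 ⟨y, hy, rfl⟩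
  have hsc : ∀ w ∈ Qx, StrongConcaveOn Qy μy (F w) := fun w hw =>
    strongConcaveOn_iff_convexOn_neg_sub.2 (hconcy w hw)
  obtain ⟨p, hp, hFp⟩ := (hs x hx).1
  obtain ⟨q, hq, hFq⟩ := (hs z hz).1
  have hmaxp : IsMaxOn (F x) Qy p := fun y hy => hFp ▸ hle x hx y hy
  have hmaxq : IsMaxOn (F z) Qy q := fun y hy => hFq ▸ hle z hz y hy
  have hlow := (hconvx yt hyt).add_inner_gradient_le (hGx z hz yt hyt) hz hx
  refine ⟨by linarith [hle x hx yt hyt], ?_⟩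
  have hsmooth : F x p - F z p - ⟪Gx z p, x - z⟫ ≤ Lxx * ‖x - z‖ ^ 2 :=
    sub_sub_inner_gradient_le_mul_sq (fun u hu => hGx u (hQx.segment_subset hz hx hu) p hp)
      (fun u hu => hxx u (hQx.segment_subset hz hx hu) z hz p hp)
  have hpq : μy * ‖p - q‖ ≤ Lxy * ‖x - z‖ :=
    (hsc z hz).mul_norm_sub_le_of_isMaxOn (hsc x hx) hq hp hmaxq hmaxp
      (fun u hu => (hGy x hx u hu).sub (hGy z hz u hu)) (fun u hu => hyx x hx z hz u hu)
  have hyt_near : μy / 2 * ‖q - yt‖ ^ 2 ≤ εy := by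
    rw [norm_sub_rev]
    linarith [(hsc z hz).add_sq_norm_sub_le_of_isMaxOn hmaxq hq hyt]
  have hcross : ⟪Gx z p - Gx z yt, x - z⟫ ≤ Lxy * ‖x - z‖ * (‖p - q‖ + ‖q - yt‖) :=
    calc ⟪Gx z p - Gx z yt, x - z⟫ ≤ ‖Gx z p - Gx z yt‖ * ‖x - z‖ := real_inner_le_norm _ _
      _ ≤ Lxy * ‖p - yt‖ * ‖x - z‖ := by gcongr; exact hxy z hz p hp yt hyt
      _ ≤ Lxy * ‖x - z‖ * (‖p - q‖ + ‖q - yt‖) := by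
        rw [mul_right_comm]
        gcongr
        · exact (mul_nonneg hμ.le (norm_nonneg _)).trans hpq
        · exact norm_sub_le_norm_sub_add_norm_sub p q yt
  have hyoung := mul_mul_add_le_two_mul_sq_div_mul_sq_add hμ (norm_nonneg _) hpq hyt_near
  linarith [hle z hz p hp, hle z hz yt hyt, inner_sub_left (𝕜 := ℝ) (Gx z p) (Gx z yt) (x - z)]

/-- (δ, L)-model property for the max-function
`s(x) = max_{y ∈ Q_y} F(x, y)`.  If `ỹ(z)` is an `ε_y`-accurate solution of the
inner maximization at `z`, then for all `x ∈ Q_x`: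
`0 ≤ s(x) − F(z, ỹ(z)) − ⟨∇_x F(z, ỹ(z)), x − z⟩ ≤ L‖x − z‖² + 2ε_y`,
with `L = L_{xx} + 2L_{xy}²/μ_y`. -/
theorem max_function_inexact_model
    (n m : ℕ) (μy Lxx Lxy εy : ℝ) (hμ : 0 < μy) (hεy : 0 ≤ εy)
    (Qx : Set (EuclideanSpace ℝ (Fin n))) (Qy : Set (EuclideanSpace ℝ (Fin m)))
    (hQx : Convex ℝ Qx) (hQy : Convex ℝ Qy)
    (F : EuclideanSpace ℝ (Fin n) → EuclideanSpace ℝ (Fin m) → ℝ)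
    (hconvx : ∀ y ∈ Qy, ConvexOn ℝ Qx (fun x => F x y))
    (hconcy : ∀ x ∈ Qx, ConvexOn ℝ Qy (fun y => -F x y - μy / 2 * ‖y‖ ^ 2))
    (Gx : EuclideanSpace ℝ (Fin n) → EuclideanSpace ℝ (Fin m) →
      EuclideanSpace ℝ (Fin n))
    (Gy : EuclideanSpace ℝ (Fin n) → EuclideanSpace ℝ (Fin m) →
      EuclideanSpace ℝ (Fin m))
    (hGx : ∀ x ∈ Qx, ∀ y ∈ Qy, HasGradientAt (fun x' => F x' y) (Gx x y) x)
    (hGy : ∀ x ∈ Qx, ∀ y ∈ Qy, HasGradientAt (fun y' => F x y') (Gy x y) y)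
    (hxx : ∀ x ∈ Qx, ∀ x' ∈ Qx, ∀ y ∈ Qy, ‖Gx x y - Gx x' y‖ ≤ Lxx * ‖x - x'‖)
    (hxy : ∀ x ∈ Qx, ∀ y ∈ Qy, ∀ y' ∈ Qy, ‖Gx x y - Gx x y'‖ ≤ Lxy * ‖y - y'‖)
    (hyx : ∀ x ∈ Qx, ∀ x' ∈ Qx, ∀ y ∈ Qy, ‖Gy x y - Gy x' y‖ ≤ Lxy * ‖x - x'‖)
    (s : EuclideanSpace ℝ (Fin n) → ℝ)
    (hs : ∀ x ∈ Qx, IsGreatest ((F x) '' Qy) (s x))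
    (z : EuclideanSpace ℝ (Fin n)) (hz : z ∈ Qx)
    (yt : EuclideanSpace ℝ (Fin m)) (hyt : yt ∈ Qy)
    (hacc : s z - F z yt ≤ εy) :
    ∀ x ∈ Qx,
      0 ≤ s x - F z yt - ⟪Gx z yt, x - z⟫ ∧
        s x - F z yt - ⟪Gx z yt, x - z⟫ ≤
          (Lxx + 2 * Lxy ^ 2 / μy) * ‖x - z‖ ^ 2 + 2 * εy :=
  max_function_inexact_model_general n m μy Lxx Lxy εy hμ Qx Qy hQx F hconvx hconcy Gx Gy hGx hGy
    hxx hxy hyx s hs z hz yt hyt hacc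
end
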